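/- Let N be an even natural number and κ ∈ {0,1}. For r_* = (r_1 ≥ … ≥ r_τ) ∈ ℛ_{N+κ} define ζ : [1, τ] → {−1, 0, 1} by ζ(k) = (−1)^k if r_k is odd and ζ(k) = 0 if r_k is even. Then r_k + ζ(k) is an even nonnegative integer for every k, and r_k + ζ(k) ≥ r_{k+1} + ζ(k+1) for every k ∈ [1, τ−1]. Moreover, the map sending r_* to (r_1+ζ(1) ≥ r_2+ζ(2) ≥ … ≥ r_τ+ζ(τ)) when r_τ > κ (or τ = 0), and to (r_1+ζ(1) ≥ r_2+ζ(2) ≥ … ≥ r_{τ−1}+ζ(τ−1)) when r_τ = κ, takes values in 𝒮^κ_N and is a two-sided inverse of the restriction of Ξ to 𝒮^κ_N. -/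

import Mathlib

/-- A partition: a nonincreasing list of positive integers (possibly empty). -/
def IsPartition (p : List ℕ) : Prop := p.Pairwise (· ≥ ·) ∧ ∀ x ∈ p, 0 < x

/-- `𝒫̃`: partitions with an even number of parts in which the parts pair up:
`p₁ = p₂, p₃ = p₄, …` (stated 0-indexed). -/
def Ptilde : Set (List ℕ) :=
  {p | IsPartition p ∧ Even p.length ∧ ∀ i, p.getD (2 * i) 0 = p.getD (2 * i + 1) 0}

/-- `𝒮^κ` for `κ ∈ {0,1}`: partitions with all parts even (and, if `κ = 0`,
an even number of parts). -/
def SK (κ : ℕ) : Set (List ℕ) :=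
  {r | IsPartition r ∧ (∀ x ∈ r, x % 2 = 0) ∧ (κ = 0 → Even r.length)}

/-- `𝒮^κ_N`. -/
def SKN (κ N : ℕ) : Set (List ℕ) := {r | r ∈ SK κ ∧ r.sum = N}

/-- `𝒜^κ_{2n} = {(r_*, p_*) ∈ 𝒮^κ × 𝒫̃ : |r_*| + |p_*| = 2n}`. -/
def AK (κ n : ℕ) : Set (List ℕ × List ℕ) :=
  {rp | rp.1 ∈ SK κ ∧ rp.2 ∈ Ptilde ∧ rp.1.sum + rp.2.sum = 2 * n}

/-- The partition whose multiset of parts is the disjoint union of the multisets of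
parts of `r` and `p`: sort `r ++ p` nonincreasingly. -/
def pmerge (r p : List ℕ) : List ℕ := (r ++ p).mergeSort (fun a b => decide (b ≤ a))

/-- `𝒬`: partitions in which every even part has even multiplicity. -/
def Qset : Set (List ℕ) :=
  {c | IsPartition c ∧ ∀ j, j % 2 = 0 → Even (c.count j)}

/-- `𝒬_N`. -/
def QN (N : ℕ) : Set (List ℕ) := {c | c ∈ Qset ∧ c.sum = N}

/-- The odd parts of `l`, listed in (nonincreasing) order with multiplicity:
`r¹ ≥ r² ≥ … ≥ r^s`. -/
def oddParts (l : List ℕ) : List ℕ := l.filter (fun x => x % 2 = 1)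

/-- The set `ℛ` (conditions stated with 1-based indices `u` for the list of odd parts;
`(oddParts l).getD (u-1) 0` is `r^u`). -/
def Rset : Set (List ℕ) :=
  {l | l ∈ Qset ∧
    (l ≠ [] → l.getD 0 0 % 2 = 1) ∧
    (l ≠ [] → Even l.length → l.getD (l.length - 1) 0 % 2 = 1) ∧
    (∀ u, 1 ≤ u → u + 1 ≤ (oddParts l).length → u % 2 = 1 →
        (oddParts l).getD u 0 < (oddParts l).getD (u - 1) 0) ∧
    (∀ u, 1 ≤ u → u + 1 ≤ (oddParts l).length → u % 2 = 0 →
        ∀ k < l.length,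
          ¬((oddParts l).getD u 0 < l.getD k 0 ∧ l.getD k 0 < (oddParts l).getD (u - 1) 0))}

/-- `ℛ_N = ℛ ∩ 𝒬_N`. -/
def RN (N : ℕ) : Set (List ℕ) := {l | l ∈ Rset ∧ l.sum = N}

/-- The `t`-th entry (0-indexed; `t` corresponds to the 1-based index `t+1`) of `Ξ(l)`:
`l_t + ψ(t)` where `ψ(t) = 1` if `t+1` is odd and `l_t < l_x` for all `x < t`;
`ψ(t) = -1` if `t+1` is even and `l_x < l_t` for all `x > t` in range; `ψ(t) = 0` else. -/
def xiEntry (l : List ℕ) (t : ℕ) : ℕ :=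
  if (t + 1) % 2 = 1 ∧ ∀ x < t, l.getD t 0 < l.getD x 0 then l.getD t 0 + 1
  else if (t + 1) % 2 = 0 ∧ ∀ x < l.length, t < x → l.getD x 0 < l.getD t 0 then
    l.getD t 0 - 1
  else l.getD t 0

/-- The map `Ξ : 𝒮^κ → 𝒫¹`; a final part `1` is appended when `σ + κ` is odd. -/
def xi (κ : ℕ) (l : List ℕ) : List ℕ :=
  (List.range l.length).map (xiEntry l) ++ (if (l.length + κ) % 2 = 1 then [1] else [])

/-- The `k`-th entry (0-indexed; `k` corresponds to the 1-based index `k+1`) of the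
inverse map: `r_k + ζ(k)` where `ζ(k) = (-1)^k` (1-based) if `r_k` is odd and
`ζ(k) = 0` if `r_k` is even. -/
def zetaEntry (l : List ℕ) (k : ℕ) : ℕ :=
  if l.getD k 0 % 2 = 1 then
    (if (k + 1) % 2 = 1 then l.getD k 0 - 1 else l.getD k 0 + 1)
  else l.getD k 0

/-- The inverse map `ℛ_{N+κ} → 𝒮^κ_N`: take `(r_k + ζ(k))_k`, dropping the last entry
when `r_τ = κ` (and keeping all entries when `τ = 0` or `r_τ > κ`). -/
def xiInv (κ : ℕ) (l : List ℕ) : List ℕ :=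
  if l ≠ [] ∧ l.getD (l.length - 1) 0 = κ then
    ((List.range l.length).map (zetaEntry l)).dropLast
  else (List.range l.length).map (zetaEntry l)

/-!
The conditions defining `ℛ` give `r_*` a rigid shape (positions are 0-based): every even part
lies in a run of equal parts occupying the positions `[a, b)` with `a` and `b` odd, and an odd
part sits at a position of the same parity as the number of odd parts before it, so by (iii)
two odd parts at positions `2i`, `2i + 1` differ. Hence `ζ`, which lowers the odd parts at even
positions and raises those at odd positions, keeps the sequence nonincreasing, its `∓ 1`s cancel
in pairs in the sum, and on the resulting even partition the strict record conditions of `ψ`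
hold exactly at the odd parts of `r_*`, while inside a run of even parts they fail. Conversely,
`Ξ` moves every part of a partition in `𝒮^κ` by at most one, in the direction `ζ` undoes.
-/

namespace List

theorem Pairwise.getD_le_getD {α : Type*} [Preorder α] {l : List α} {d : α}
    (hs : l.Pairwise (· ≥ ·)) {x y : ℕ} (hxy : x ≤ y) (hy : y < l.length) :
    l.getD y d ≤ l.getD x d := by
  rcases hxy.eq_or_lt with rfl | h
  · exact le_rfl
  · rw [getD_eq_getElem _ _ hy, getD_eq_getElem _ _ (h.trans hy)]
    exact pairwise_iff_getElem.1 hs x y _ hy h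

theorem Pairwise.le_of_mem_take {α : Type*} [Preorder α] {l : List α}
    (hs : l.Pairwise (· ≥ ·)) {k : ℕ} (hk : k < l.length) {x : α} (hx : x ∈ l.take k) :
    l[k] ≤ x := by
  rw [← take_append_drop k l, pairwise_append] at hs
  exact hs.2.2 x hx _ (by rw [drop_eq_getElem_cons hk]; exact mem_cons_self)

theorem Pairwise.le_of_mem_drop {α : Type*} [Preorder α] {l : List α}
    (hs : l.Pairwise (· ≥ ·)) {k : ℕ} (hk : k < l.length) {x : α} (hx : x ∈ l.drop k) :
    x ≤ l[k] := by
  have hd := hs.sublist (drop_sublist k l)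
  rw [drop_eq_getElem_cons hk] at hx hd
  rcases mem_cons.1 hx with rfl | hx
  · exact le_rfl
  · exact rel_of_pairwise_cons hd hx

theorem Pairwise.lt_countP_iff {α : Type*} [LE α] {l : List α} (hs : l.Pairwise (· ≥ ·))
    {p : α → Bool} (hp : ∀ a b, b ≤ a → p b → p a) {k : ℕ} (hk : k < l.length) :
    k < l.countP p ↔ p l[k] := by
  induction l generalizing k with
  | nil => simp at hk
  | cons a t ih =>
    rw [pairwise_cons] at hs
    by_cases hpa : p a
    · cases k with
      | zero => simp [hpa]
      | succ k => simp [hpa, ← ih hs.2 (by simpa using hk)]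
    · have ht : t.countP p = 0 :=
        countP_eq_zero.2 fun x hx hpx => hpa (hp a x (hs.1 x hx) hpx)
      cases k with
      | zero => simp [hpa, ht]
      | succ k =>
        simp only [countP_cons, hpa, ht, getElem_cons_succ]
        exact iff_of_false (by simp) fun h => hpa (hp _ _ (hs.1 _ (getElem_mem _)) h)

theorem getD_map_range {α : Type*} {f : ℕ → α} {d : α} {n t : ℕ} (ht : t < n) :
    ((range n).map f).getD t d = f t := by
  rw [getD_eq_getElem _ _ (by simpa using ht), getElem_map, getElem_range]

theorem map_range_eq_of_getD {α : Type*} {f : ℕ → α} {l : List α} {d : α}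
    (h : ∀ t < l.length, f t = l.getD t d) :
    (range l.length).map f = l :=
  ext_getElem (by simp) fun t h₁ h₂ => by
    rw [getElem_map, getElem_range, h t h₂, getD_eq_getElem _ _ h₂]

theorem countP_le_eq_countP_lt_add_count {α : Type*} [LinearOrder α] (j : α) (l : List α) :
    l.countP (j ≤ ·) = l.countP (j < ·) + l.count j := by
  induction l with
  | nil => simp
  | cons a t ih => grind

theorem even_countP_of_even_count {α : Type*} [DecidableEq α] {l : List α} {p : α → Bool}
    (h : ∀ x ∈ l, p x → Even (l.count x)) : Even (l.countP p) := by
  rw [countP_eq_length_filter, ← sum_toFinset_count_eq_length]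
  refine Finset.even_sum _ fun x hx => ?_
  rw [mem_toFinset, mem_filter] at hx
  rw [count_filter hx.2]
  exact h x hx.1 hx.2

theorem sum_mod_two_eq_countP_odd (l : List ℕ) : l.sum % 2 = l.countP (· % 2 = 1) % 2 := by
  induction l with
  | nil => rfl
  | cons a t ih =>
    rw [sum_cons, countP_cons]
    by_cases h : a % 2 = 1 <;> simp [h] <;> omega

theorem countP_eq_countP_oddParts_add (p : ℕ → Bool) (l : List ℕ) :
    l.countP p = (oddParts l).countP p + l.countP (fun x => p x && x % 2 = 0) := by
  induction l with
  | nil => rfl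
  | cons a t ih =>
    simp only [oddParts] at ih ⊢
    grind

theorem getD_oddParts_countP_take {l : List ℕ} {k : ℕ} (hk : k < l.length)
    (ho : l[k] % 2 = 1) :
    (l.take k).countP (· % 2 = 1) < (oddParts l).length ∧
      (oddParts l).getD ((l.take k).countP (· % 2 = 1)) 0 = l[k] := by
  have hsplit : oddParts l =
      (l.take k).filter (· % 2 = 1) ++ l[k] :: (l.drop (k + 1)).filter (· % 2 = 1) := by
    have hl : l = l.take k ++ l[k] :: l.drop (k + 1) := by
      rw [← drop_eq_getElem_cons hk, take_append_drop]
    conv_lhs => rw [oddParts, hl]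
    rw [filter_append, filter_cons_of_pos (by simpa using ho)]
  rw [hsplit, countP_eq_length_filter]
  refine ⟨by simp, ?_⟩
  rw [getD_eq_getElem _ _ (by simp), getElem_append_right le_rfl]
  simp

end List

namespace Qset

variable {l : List ℕ}

theorem pairwise (hQ : l ∈ Qset) : l.Pairwise (· ≥ ·) := hQ.1.1

theorem getD_pos (hQ : l ∈ Qset) {k : ℕ} (hk : k < l.length) : 0 < l.getD k 0 := by
  rw [List.getD_eq_getElem _ _ hk]
  exact hQ.1.2 _ (l.getElem_mem hk)

theorem even_countP (hQ : l ∈ Qset) {p : ℕ → Bool} (hp : ∀ x, p x → x % 2 = 0) :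
    Even (l.countP p) :=
  List.even_countP_of_even_count fun x _ hx => hQ.2 x (hp x hx)

theorem length_mod_two (hQ : l ∈ Qset) : l.length % 2 = l.countP (· % 2 = 1) % 2 := by
  obtain ⟨c, hc⟩ := even_countP hQ (p := fun x => ¬ x % 2 = 1) (by simp)
  have hlen := List.length_eq_countP_add_countP (· % 2 = 1) (l := l)
  simp only [decide_eq_true_eq] at hlen
  omega

theorem length_mod_two_eq_sum (hQ : l ∈ Qset) : l.length % 2 = l.sum % 2 := by
  rw [length_mod_two hQ, List.sum_mod_two_eq_countP_odd]

/-- The even parts before an odd part are exactly the even parts above it, and those come in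
pairs. -/
theorem mod_two_eq_countP_take (hQ : l ∈ Qset) {k : ℕ} (hk : k < l.length)
    (ho : l[k] % 2 = 1) : k % 2 = (l.take k).countP (· % 2 = 1) % 2 := by
  have hs := pairwise hQ
  let q : ℕ → Bool := fun x => l[k] < x ∧ x % 2 = 0
  have hdrop : (l.drop k).countP q = 0 := List.countP_eq_zero.2 fun x hx => by
    have := hs.le_of_mem_drop hk hx
    simp only [q, decide_eq_true_eq]
    omega
  have htake : (l.take k).countP q = (l.take k).countP (fun x => ¬ x % 2 = 1) :=
    List.countP_congr fun x hx => by
      have := hs.le_of_mem_take hk hx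
      simp only [q, decide_eq_true_eq]
      omega
  have hsplit : l.countP q = (l.take k).countP q + (l.drop k).countP q := by
    rw [← List.countP_append, List.take_append_drop]
  obtain ⟨c, hc⟩ := even_countP hQ (p := q) (by simp [q])
  have hlen := List.length_eq_countP_add_countP (· % 2 = 1) (l := l.take k)
  simp only [decide_eq_true_eq, List.length_take_of_le hk.le] at hlen
  omega

end Qset

namespace Rset

variable {l : List ℕ}

theorem getD_succ_lt_of_odd (hR : l ∈ Rset) {k : ℕ} (hk : k + 1 < l.length)
    (hke : k % 2 = 0) (ho : l.getD k 0 % 2 = 1) (ho' : l.getD (k + 1) 0 % 2 = 1) :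
    l.getD (k + 1) 0 < l.getD k 0 := by
  obtain ⟨hQ, -, -, hiii, -⟩ := hR
  have hk' : k < l.length := by omega
  rw [List.getD_eq_getElem _ _ hk] at ho' ⊢
  rw [List.getD_eq_getElem _ _ hk'] at ho ⊢
  have hu := Qset.mod_two_eq_countP_take hQ hk' ho
  obtain ⟨-, h0⟩ := List.getD_oddParts_countP_take hk' ho
  obtain ⟨h1, h2⟩ := List.getD_oddParts_countP_take hk ho'
  simp only [List.take_succ_eq_append_getElem hk', List.countP_append, List.countP_singleton,
    ho, decide_true, if_true] at h1 h2
  have h3 := hiii _ (by omega) h1 (by omega)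
  rwa [h2, Nat.add_sub_cancel, h0] at h3

theorem odd_countP_oddParts_gt (hR : l ∈ Rset) {k : ℕ} (hk : k < l.length)
    (he : l.getD k 0 % 2 = 0) : (oddParts l).countP (l.getD k 0 < ·) % 2 = 1 := by
  obtain ⟨hQ, hfirst, hlast, -, hiv⟩ := hR
  have hs := Qset.pairwise hQ
  have hne : l ≠ [] := List.ne_nil_of_length_pos (by omega)
  have hj0 := hs.getD_le_getD (d := 0) (Nat.zero_le k) hk
  have hjlast := hs.getD_le_getD (d := 0) (show k ≤ l.length - 1 by omega) (by omega)
  generalize hj : l.getD k 0 = j at he hj0 hjlast ⊢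
  set O := oddParts l
  have hOs : O.Pairwise (· ≥ ·) := hs.filter _
  have hO : ∀ {x}, x ∈ O ↔ x ∈ l ∧ x % 2 = 1 := by simp [O, oddParts]
  set w := O.countP (j < ·)
  have hup : ∀ a b : ℕ, b ≤ a → decide (j < b) → decide (j < a) := by simp; omega
  have hw : 0 < w := by
    have h0 := hfirst hne
    rw [List.getD_eq_getElem _ _ (show 0 < l.length by omega)] at h0 hj0
    exact List.countP_pos_iff.2 ⟨l[0], hO.2 ⟨l.getElem_mem _, h0⟩, by simp; omega⟩
  by_contra hodd
  rcases (List.countP_le_length (p := (j < ·)) (l := O)).lt_or_eq with hlt | heq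
  · -- `j` lies strictly between `r^w` and `r^(w+1)`, against (iv)
    have h1 := (hOs.lt_countP_iff hup (k := w - 1) (by omega)).1 (by omega)
    have h2 := (hOs.lt_countP_iff hup hlt).not.1 (by omega)
    have h3 := (hO.1 (O.getElem_mem hlt)).2
    refine hiv w hw (by omega) (by omega) k hk ?_
    rw [hj, List.getD_eq_getElem _ _ hlt, List.getD_eq_getElem _ _ (by omega)]
    simp only [decide_eq_true_eq, not_lt] at h1 h2
    omega
  · -- all odd parts exceed `j`, so `l` has evenly many parts and by (ii) its last part is odd
    have hall : ∀ x ∈ O, j < x := by simpa using List.countP_eq_length.1 heq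
    have hlen : Even l.length := by
      rw [Nat.even_iff, Qset.length_mod_two hQ, List.countP_eq_length_filter]
      change O.length % 2 = 0
      omega
    have hodd := hlast hne hlen
    rw [List.getD_eq_getElem _ _ (show l.length - 1 < l.length by omega)] at hodd hjlast
    have := hall _ (hO.2 ⟨l.getElem_mem _, hodd⟩)
    omega

theorem exists_run_of_even (hR : l ∈ Rset) {k : ℕ} (hk : k < l.length)
    (he : l.getD k 0 % 2 = 0) :
    ∃ a b, a % 2 = 1 ∧ b % 2 = 1 ∧ a ≤ k ∧ k < b ∧ b ≤ l.length ∧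
      ∀ i, a ≤ i → i < b → l.getD i 0 = l.getD k 0 := by
  have hs := Qset.pairwise hR.1
  have hodd := odd_countP_oddParts_gt hR hk he
  have hjk := List.getD_eq_getElem l 0 hk
  generalize l.getD k 0 = j at he hodd hjk ⊢
  have hlt := fun {i} (hi : i < l.length) =>
    hs.lt_countP_iff (p := (j < ·)) (by simp; omega) hi
  have hle := fun {i} (hi : i < l.length) =>
    hs.lt_countP_iff (p := (j ≤ ·)) (by simp; omega) hi
  obtain ⟨c, hc⟩ := Qset.even_countP hR.1 (p := fun x => j < x && x % 2 = 0) (by simp)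
  obtain ⟨d, hd⟩ := hR.1.2 j he
  have ha := List.countP_eq_countP_oddParts_add (j < ·) l
  have hb := List.countP_le_eq_countP_lt_add_count j l
  refine ⟨l.countP (j < ·), l.countP (j ≤ ·), by omega, by omega, ?_, ?_,
    List.countP_le_length, fun i hai hib => ?_⟩
  · exact not_lt.1 fun h => by simpa [hjk] using (hlt hk).1 h
  · exact (hle hk).2 (by simp [hjk])
  · have hi : i < l.length := lt_of_lt_of_le hib List.countP_le_length
    have h1 := (hlt hi).not.1 (by omega)
    have h2 := (hle hi).1 hib
    simp only [decide_eq_true_eq, not_lt] at h1 h2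
    rw [List.getD_eq_getElem _ _ hi]
    omega

end Rset

section Zeta

variable {l : List ℕ} {k : ℕ}

theorem even_zetaEntry (l : List ℕ) (k : ℕ) : Even (zetaEntry l k) := by
  rw [zetaEntry, Nat.even_iff]
  split_ifs <;> omega

theorem zetaEntry_of_even (h : l.getD k 0 % 2 = 0) : zetaEntry l k = l.getD k 0 := by
  rw [zetaEntry, if_neg (by omega)]

theorem zetaEntry_of_odd_of_even_index (h : l.getD k 0 % 2 = 1) (hk : k % 2 = 0) :
    zetaEntry l k = l.getD k 0 - 1 := by
  rw [zetaEntry, if_pos h, if_pos (by omega)]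

theorem zetaEntry_of_odd_of_odd_index (h : l.getD k 0 % 2 = 1) (hk : k % 2 = 1) :
    zetaEntry l k = l.getD k 0 + 1 := by
  rw [zetaEntry, if_pos h, if_neg (by omega)]

theorem zetaEntry_le_of_even_index (hk : k % 2 = 0) : zetaEntry l k ≤ l.getD k 0 := by
  rw [zetaEntry]
  split_ifs <;> omega

theorem le_zetaEntry_of_odd_index (hk : k % 2 = 1) : l.getD k 0 ≤ zetaEntry l k := by
  rw [zetaEntry]
  split_ifs <;> omega

theorem Rset.zetaEntry_succ_le (hR : l ∈ Rset) (hk : k + 1 < l.length) :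
    zetaEntry l (k + 1) ≤ zetaEntry l k := by
  have hle := (Qset.pairwise hR.1).getD_le_getD (d := 0) (k.le_add_right 1) hk
  have hlt := imp_iff_not_or.1
    fun h : k % 2 = 0 ∧ l.getD k 0 % 2 = 1 ∧ l.getD (k + 1) 0 % 2 = 1 =>
      Rset.getD_succ_lt_of_odd hR hk h.1 h.2.1 h.2.2
  simp only [zetaEntry]
  split_ifs <;> omega

theorem Rset.zetaEntry_le_zetaEntry (hR : l ∈ Rset) {x y : ℕ} (hxy : x ≤ y)
    (hy : y < l.length) : zetaEntry l y ≤ zetaEntry l x := by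
  induction y, hxy using Nat.le_induction with
  | base => exact le_rfl
  | succ y _ ih => exact (zetaEntry_succ_le hR hy).trans (ih (by omega))

theorem Rset.zetaEntry_eq_zero (hR : l ∈ Rset) (hk : k < l.length) (h0 : zetaEntry l k = 0) :
    k + 1 = l.length ∧ l.getD k 0 = 1 ∧ k % 2 = 0 := by
  have hpos := Qset.getD_pos hR.1 hk
  obtain ⟨h1, h2⟩ : l.getD k 0 = 1 ∧ k % 2 = 0 := by
    rw [zetaEntry] at h0
    split_ifs at h0 <;> omega
  refine ⟨?_, h1, h2⟩
  by_contra hne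
  have hk' : k + 1 < l.length := by omega
  have := (Qset.pairwise hR.1).getD_le_getD (d := 0) (k.le_add_right 1) hk'
  have := Qset.getD_pos hR.1 hk'
  have := Rset.getD_succ_lt_of_odd hR hk' h2 (by omega) (by omega)
  omega

/-- The error term `(number of odd parts among the first k) mod 2` comes from the `∓ 1`s
of `ζ`, which alternate along the odd parts. -/
theorem Qset.sum_range_zetaEntry_add (hQ : l ∈ Qset) (hk : k ≤ l.length) :
    ((List.range k).map (zetaEntry l)).sum + (l.take k).countP (· % 2 = 1) % 2 =
      (l.take k).sum := by
  induction k with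
  | zero => simp
  | succ n ih =>
    have hn : n < l.length := by omega
    have hpar := Qset.mod_two_eq_countP_take hQ hn
    rw [List.range_succ, List.map_append, List.sum_append, List.take_succ_eq_append_getElem hn,
      List.countP_append, List.sum_append, ← ih (by omega)]
    simp only [List.map_singleton, List.sum_singleton, List.countP_singleton, zetaEntry,
      List.getD_eq_getElem _ _ hn]
    split_ifs <;> simp_all <;> omega

theorem Qset.sum_zetaEntry (hQ : l ∈ Qset) :
    ((List.range l.length).map (zetaEntry l)).sum + l.length % 2 = l.sum := by
  simpa [Qset.length_mod_two hQ] using Qset.sum_range_zetaEntry_add hQ le_rfl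

end Zeta

section Xi

variable {r : List ℕ} {t : ℕ}

theorem xiEntry_of_lt_of_even_index (ht : t % 2 = 0) (h : ∀ x < t, r.getD t 0 < r.getD x 0) :
    xiEntry r t = r.getD t 0 + 1 := by
  rw [xiEntry, if_pos ⟨by omega, h⟩]

theorem xiEntry_of_gt_of_odd_index (ht : t % 2 = 1)
    (h : ∀ x < r.length, t < x → r.getD x 0 < r.getD t 0) : xiEntry r t = r.getD t 0 - 1 := by
  rw [xiEntry, if_neg (by omega), if_pos ⟨by omega, h⟩]

theorem xiEntry_of_getD_pred (ht : t % 2 = 0) (h1 : 1 ≤ t)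
    (h : r.getD (t - 1) 0 = r.getD t 0) : xiEntry r t = r.getD t 0 := by
  rw [xiEntry, if_neg fun hc => (hc.2 (t - 1) (by omega)).ne' h, if_neg (by omega)]

theorem xiEntry_of_getD_succ (ht : t % 2 = 1) (h1 : t + 1 < r.length)
    (h : r.getD (t + 1) 0 = r.getD t 0) : xiEntry r t = r.getD t 0 := by
  rw [xiEntry, if_neg (by omega), if_neg fun hc => (hc.2 (t + 1) h1 (by omega)).ne h]

theorem xiEntry_cases (r : List ℕ) (t : ℕ) :
    (t % 2 = 0 ∧ xiEntry r t = r.getD t 0 + 1) ∨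
      (t % 2 = 1 ∧ xiEntry r t = r.getD t 0 - 1) ∨ xiEntry r t = r.getD t 0 := by
  rw [xiEntry]
  split_ifs with h1 h2
  · exact Or.inl ⟨by omega, rfl⟩
  · exact Or.inr (Or.inl ⟨by omega, rfl⟩)
  · exact Or.inr (Or.inr rfl)

theorem zetaEntry_of_getD_eq_xiEntry {L : List ℕ} (h : L.getD t 0 = xiEntry r t)
    (he : r.getD t 0 % 2 = 0) : zetaEntry L t = r.getD t 0 := by
  rw [zetaEntry, h]
  rcases xiEntry_cases r t with ⟨ht, hx⟩ | ⟨ht, hx⟩ | hx <;> rw [hx] <;> split_ifs <;> omega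

theorem getD_xi {κ : ℕ} (ht : t < r.length) : (xi κ r).getD t 0 = xiEntry r t := by
  rw [xi, List.getD_append _ _ _ _ (by simpa using ht), List.getD_map_range ht]

end Xi

section Inverse

variable {l : List ℕ} {n : ℕ}

theorem Rset.xiEntry_map_range_zetaEntry (hR : l ∈ Rset) (hn : n ≤ l.length)
    (hodd : ∀ i, n ≤ i → i < l.length → l.getD i 0 % 2 = 1) {t : ℕ} (ht : t < n) :
    xiEntry ((List.range n).map (zetaEntry l)) t = l.getD t 0 := by
  have hr : ∀ x < n, ((List.range n).map (zetaEntry l)).getD x 0 = zetaEntry l x :=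
    fun x hx => List.getD_map_range hx
  have htl : t < l.length := by omega
  have hs := Qset.pairwise hR.1
  rcases Nat.mod_two_eq_zero_or_one (l.getD t 0) with he | ho
  · obtain ⟨a, b, ha, hb, hat, htb, hbl, hrun⟩ := exists_run_of_even hR htl he
    rcases Nat.mod_two_eq_zero_or_one t with hte | hto
    · have hpred := hrun (t - 1) (by omega) (by omega)
      rw [xiEntry_of_getD_pred hte (by omega), hr t ht, zetaEntry_of_even he]
      rw [hr _ (by omega), hr t ht, zetaEntry_of_even he, zetaEntry_of_even (by omega), hpred]
    · have hsucc := hrun (t + 1) (by omega) (by omega)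
      have htn : t + 1 < n := not_le.1 fun h => by
        have := hodd (t + 1) h (by omega)
        omega
      rw [xiEntry_of_getD_succ hto (by simpa using htn), hr t ht, zetaEntry_of_even he]
      rw [hr _ htn, hr t ht, zetaEntry_of_even he, zetaEntry_of_even (by omega), hsucc]
  · rcases Nat.mod_two_eq_zero_or_one t with hte | hto
    · rw [xiEntry_of_lt_of_even_index hte, hr t ht, zetaEntry_of_odd_of_even_index ho hte]
      · omega
      · intro x hx
        rw [hr t ht, hr x (by omega), zetaEntry_of_odd_of_even_index ho hte]
        have h1 := Rset.zetaEntry_le_zetaEntry hR (show x ≤ t - 1 by omega) (by omega)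
        have h2 := le_zetaEntry_of_odd_index (l := l) (show (t - 1) % 2 = 1 by omega)
        have h3 := hs.getD_le_getD (d := 0) (show t - 1 ≤ t by omega) htl
        omega
    · rw [xiEntry_of_gt_of_odd_index hto, hr t ht, zetaEntry_of_odd_of_odd_index ho hto]
      · omega
      · intro x hx htx
        rw [List.length_map, List.length_range] at hx
        rw [hr t ht, hr x hx, zetaEntry_of_odd_of_odd_index ho hto]
        have h1 := Rset.zetaEntry_le_zetaEntry hR (show t + 1 ≤ x by omega) (by omega)
        have h2 := zetaEntry_le_of_even_index (l := l) (show (t + 1) % 2 = 0 by omega)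
        have h3 := hs.getD_le_getD (d := 0) (t.le_add_right 1) (show t + 1 < l.length by omega)
        omega

theorem Rset.xi_map_range_zetaEntry {κ : ℕ} (hR : l ∈ Rset) (hn : n ≤ l.length)
    (hodd : ∀ i, n ≤ i → i < l.length → l.getD i 0 % 2 = 1)
    (htail : l.drop n = if (n + κ) % 2 = 1 then [1] else []) :
    xi κ ((List.range n).map (zetaEntry l)) = l := by
  have hlen : (l.take n).length = n := List.length_take_of_le hn
  rw [xi, List.length_map, List.length_range, ← htail]
  conv_rhs => rw [← List.take_append_drop n l]
  congr 1
  have key := List.map_range_eq_of_getD (l := l.take n) (d := 0)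
    (f := xiEntry ((List.range n).map (zetaEntry l))) fun t ht => by
      rw [hlen] at ht
      rw [List.getD_eq_getElem _ _ (by rwa [hlen]), List.getElem_take,
        ← List.getD_eq_getElem _ 0 (by omega)]
      exact Rset.xiEntry_map_range_zetaEntry hR hn hodd ht
  rwa [hlen] at key

theorem Rset.map_range_zetaEntry_mem_SK {κ : ℕ} (hR : l ∈ Rset) (hn : n ≤ l.length)
    (hpos : ∀ k < n, zetaEntry l k ≠ 0) (hκ : κ = 0 → Even n) :
    (List.range n).map (zetaEntry l) ∈ SK κ := by
  refine ⟨⟨?_, ?_⟩, ?_, by simpa using hκ⟩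
  · refine List.pairwise_map.2 (List.pairwise_lt_range.imp_of_mem fun hx hy hxy => ?_)
    exact Rset.zetaEntry_le_zetaEntry hR hxy.le (by simp at hy; omega)
  · simp only [List.mem_map, List.mem_range]
    rintro _ ⟨k, hk, rfl⟩
    exact Nat.pos_of_ne_zero (hpos k hk)
  · simp only [List.mem_map]
    rintro _ ⟨k, -, rfl⟩
    exact Nat.even_iff.1 (even_zetaEntry l k)

theorem Rset.mem_SKN_and_xi_eq_of_last_eq_one {N : ℕ} (hR : l ∈ Rset)
    (hn : l.length = n + 1) (hne : n % 2 = 0) (hlast : l.getD n 0 = 1) (hsum : l.sum = N + 1) :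
    (List.range n).map (zetaEntry l) ∈ SKN 1 N ∧
      xi 1 ((List.range n).map (zetaEntry l)) = l := by
  have hz : zetaEntry l n = 0 := by
    rw [zetaEntry_of_odd_of_even_index (by omega) hne, hlast]
  have hζ := Qset.sum_zetaEntry hR.1
  rw [hn, List.range_succ, List.map_append, List.sum_append, List.map_singleton,
    List.sum_singleton, hz] at hζ
  have htail : l.drop n = [1] := by
    rw [List.drop_eq_getElem_cons (by omega), List.drop_of_length_le (by omega),
      ← List.getD_eq_getElem _ 0 (by omega), hlast]
  refine ⟨⟨Rset.map_range_zetaEntry_mem_SK hR (by omega) (fun k hk h0 => ?_) (by simp),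
    by omega⟩, Rset.xi_map_range_zetaEntry hR (by omega) (fun i h1 h2 => ?_) ?_⟩
  · have := Rset.zetaEntry_eq_zero hR (by omega) h0
    omega
  · rw [show i = n by omega, hlast]
  · rw [htail, if_pos (by omega)]

theorem Rset.mem_SKN_and_xi_eq_of_not_last_eq {N κ : ℕ} (hR : l ∈ Rset)
    (hτ : l.length % 2 = κ) (hsum : l.sum = N + κ)
    (hlast : ¬(l ≠ [] ∧ l.getD (l.length - 1) 0 = κ)) :
    (List.range l.length).map (zetaEntry l) ∈ SKN κ N ∧
      xi κ ((List.range l.length).map (zetaEntry l)) = l := by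
  have hζ := Qset.sum_zetaEntry hR.1
  refine ⟨⟨Rset.map_range_zetaEntry_mem_SK hR le_rfl (fun k hk h0 => ?_)
    (fun h => Nat.even_iff.2 (by omega)), by omega⟩,
    Rset.xi_map_range_zetaEntry hR le_rfl (fun i h1 h2 => by omega) ?_⟩
  · obtain ⟨h1, h2, h3⟩ := Rset.zetaEntry_eq_zero hR hk h0
    refine hlast ⟨List.ne_nil_of_length_pos (by omega), ?_⟩
    rw [← h1, Nat.add_sub_cancel, h2]
    omega
  · rw [List.drop_of_length_le le_rfl, if_neg (by omega)]

theorem Rset.xiInv_mem_SKN_and_xi_xiInv {N κ : ℕ} (hN : Even N)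
    (hκ : κ = 0 ∨ κ = 1) (hR : l ∈ Rset) (hsum : l.sum = N + κ) :
    xiInv κ l ∈ SKN κ N ∧ xi κ (xiInv κ l) = l := by
  have hτ : l.length % 2 = κ := by
    have := Qset.length_mod_two_eq_sum hR.1
    rw [hsum] at this
    rcases hN with ⟨m, rfl⟩
    rcases hκ with rfl | rfl <;> omega
  by_cases hdrop : l ≠ [] ∧ l.getD (l.length - 1) 0 = κ
  · obtain ⟨hne, hlast⟩ := hdrop
    obtain ⟨n, hn⟩ : ∃ n, l.length = n + 1 :=
      Nat.exists_eq_add_one.2 (List.length_pos_iff.2 hne)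
    have hκ1 : κ = 1 := by
      have := Qset.getD_pos hR.1 (k := l.length - 1) (by omega)
      omega
    subst hκ1
    rw [xiInv, if_pos ⟨hne, hlast⟩, hn, List.range_succ, List.map_append, List.map_singleton,
      List.dropLast_concat]
    rw [hn, Nat.add_sub_cancel] at hlast
    exact Rset.mem_SKN_and_xi_eq_of_last_eq_one hR hn (by omega) hlast hsum
  · rw [xiInv, if_neg hdrop]
    exact Rset.mem_SKN_and_xi_eq_of_not_last_eq hR hτ hsum hdrop

end Inverse

theorem SK.xiInv_xi {r : List ℕ} {κ : ℕ} (hκ : κ = 0 ∨ κ = 1) (hr : r ∈ SK κ) :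
    xiInv κ (xi κ r) = r := by
  obtain ⟨⟨-, hpos⟩, heven, hκlen⟩ := hr
  have hσκ : κ = 0 → r.length % 2 = 0 := fun h => Nat.even_iff.1 (hκlen h)
  have hpart : ∀ t < r.length, r.getD t 0 % 2 = 0 ∧ 0 < r.getD t 0 := fun t ht => by
    rw [List.getD_eq_getElem _ _ ht]
    exact ⟨heven _ (r.getElem_mem ht), hpos _ (r.getElem_mem ht)⟩
  have hζ : (List.range r.length).map (zetaEntry (xi κ r)) = r :=
    List.map_range_eq_of_getD fun t ht =>
      zetaEntry_of_getD_eq_xiEntry (getD_xi ht) (hpart t ht).1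
  by_cases hcase : κ = 1 ∧ r.length % 2 = 0
  · have hxi : xi κ r = (List.range r.length).map (xiEntry r) ++ [1] := by
      rw [xi, if_pos (by omega)]
    have hlast : (xi κ r).getD ((xi κ r).length - 1) 0 = κ := by
      rw [hxi, List.getD_eq_getElem _ _ (by simp)]
      simp [hcase.1]
    have hlen : (xi κ r).length = r.length + 1 := by simp [hxi]
    rw [xiInv, if_pos ⟨by simp [hxi], hlast⟩, hlen, List.range_succ, List.map_append,
      List.map_singleton, List.dropLast_concat, hζ]
  · have hxi : xi κ r = (List.range r.length).map (xiEntry r) := by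
      rw [xi, if_neg (by omega), List.append_nil]
    have hlen : (xi κ r).length = r.length := by simp [hxi]
    rw [xiInv, if_neg, hlen, hζ]
    rintro ⟨hne, hlast⟩
    have hσ : 0 < r.length := by rw [← hlen]; exact List.length_pos_iff.2 hne
    rw [hlen, getD_xi (by omega)] at hlast
    have := hpart (r.length - 1) (by omega)
    rcases xiEntry_cases r (r.length - 1) with ⟨ht, hx⟩ | ⟨ht, hx⟩ | hx <;> omega

/-- for even `N`, `κ ∈ {0,1}` and `r_* ∈ ℛ_{N+κ}`: each `r_k + ζ(k)` is even,
the sequence `(r_k + ζ(k))_k` is nonincreasing, and the map `xiInv κ` takes values in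
`𝒮^κ_N` and is a two-sided inverse of the restriction of `Ξ` to `𝒮^κ_N`. -/
theorem stmt4 (N κ : ℕ) (hN : Even N) (hκ : κ = 0 ∨ κ = 1) :
    (∀ l ∈ RN (N + κ),
      (∀ k < l.length, Even (zetaEntry l k)) ∧
      (∀ k, k + 1 < l.length → zetaEntry l (k + 1) ≤ zetaEntry l k) ∧
      xiInv κ l ∈ SKN κ N ∧ xi κ (xiInv κ l) = l) ∧
    ∀ r ∈ SKN κ N, xiInv κ (xi κ r) = r := by
  refine ⟨fun l ⟨hR, hsum⟩ => ?_, fun r hr => SK.xiInv_xi hκ hr.1⟩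
  exact ⟨fun k _ => even_zetaEntry l k, fun k hk => Rset.zetaEntry_succ_le hR hk,
    Rset.xiInv_mem_SKN_and_xi_xiInv hN hκ hR hsum⟩
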